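/- The constant C_F in the refined pre-Bloch group satisfies ⟨−1⟩·C_F = C_F. -/

import Mathlib

open scoped Classical

variable (F : Type) [Field F]

/-- The subgroup of squares in `F^×`. -/
def sqSubgroup : Subgroup Fˣ := MonoidHom.range (powMonoidHom 2 : Fˣ →* Fˣ)

/-- The square class group `F^×/(F^×)²`. -/
def SqClassGroup : Type := Fˣ ⧸ sqSubgroup F

instance : CommGroup (SqClassGroup F) := inferInstanceAs (CommGroup (Fˣ ⧸ sqSubgroup F))

/-- The group ring `R_F = ℤ[F^×/(F^×)²]`. -/
abbrev GrpRing := MonoidAlgebra ℤ (SqClassGroup F)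

/-- `⟨x⟩ ∈ R_F`, the square class of `x ∈ F^×` (with the junk convention `⟨0⟩ = 1`). -/
noncomputable def cls (x : F) : GrpRing F :=
  if h : x = 0 then 1
  else MonoidAlgebra.of ℤ (SqClassGroup F)
    (QuotientGroup.mk (Units.mk0 x h) : Fˣ ⧸ sqSubgroup F)

/-- The relators of the refined pre-Bloch group: `[0]`, `[1]` and the refined five-term
relators `S_{x,y}`, inside the free `R_F`-module on the set `F` of generator labels. -/
noncomputable def refinedRels : Set (F →₀ GrpRing F) :=
  {Finsupp.single (0 : F) 1, Finsupp.single (1 : F) 1} ∪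
  {z | ∃ x y : F, x ≠ 0 ∧ x ≠ 1 ∧ y ≠ 0 ∧ y ≠ 1 ∧ x ≠ y ∧
    z = Finsupp.single x 1 - Finsupp.single y 1
        + Finsupp.single (y / x) (cls F x)
        - Finsupp.single ((1 - x⁻¹) / (1 - y⁻¹)) (cls F (x⁻¹ - 1))
        + Finsupp.single ((1 - x) / (1 - y)) (cls F (1 - x))}

/-- The refined pre-Bloch group `RP(F)`: the `R_F`-module with generators `[x]`, `x ∈ F^×`,
subject to `[1] = 0` and the refined five-term relations `S_{x,y}`. -/
abbrev RP := (F →₀ GrpRing F) ⧸ Submodule.span (GrpRing F) (refinedRels F)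

/-- The generator `[x]` of `RP(F)`. -/
noncomputable def gen (x : F) : RP F :=
  Submodule.Quotient.mk (Finsupp.single x 1)

/-- `ψ₁(x) = [x] + ⟨-1⟩[x⁻¹]`. -/
noncomputable def psi1 (x : F) : RP F := gen F x + cls F (-1) • gen F x⁻¹

/-- `ψ₂(x) = ⟨x⁻¹-1⟩[x] + ⟨1-x⟩[x⁻¹]` for `x ≠ 1`, and `ψ₂(1) = 0`. -/
noncomputable def psi2 (x : F) : RP F :=
  if x = 1 then 0 else cls F (x⁻¹ - 1) • gen F x + cls F (1 - x) • gen F x⁻¹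


/-- The expression `C(x) = [x] + ⟨-1⟩[1-x] + ⟨⟨1-x⟩⟩ψ₁(x)` in `RP(F)`. -/
noncomputable def Cexpr (x : F) : RP F :=
  gen F x + cls F (-1) • gen F (1 - x) + (cls F (1 - x) - 1) • psi1 F x

/-!
`ψ₁` is a crossed homomorphism: the five-term relations `S_{a,ab}` and `S_{a⁻¹,(ab)⁻¹}` combine
to `ψ₁(ab) = ψ₁(a) + ⟨a⟩ψ₁(b)`. Comparing `ψ₁(wu)` and `ψ₁(u)` for an auxiliary `u` (this is
where `F` needs a fourth element) gives `⟨-1⟩ψ₁(w) = -⟨w⟩ψ₁(w)`, and symmetrising the cocycle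
identity gives `⟨⟨b⟩⟩ψ₁(a) = ⟨⟨a⟩⟩ψ₁(b)`. The relations `S_{x,1-x}` and `S_{1-x,x}` then express
`(⟨-1⟩ - 1)([x] - [1-x])` as a multiple of `⟨⟨x⟩⟩⟨⟨1-x⟩⟩ψ₁((1-x)/x)`, which these identities
show to vanish, as does `⟨⟨1-x⟩⟩(⟨-1⟩ - 1)ψ₁(x)`.
-/

section

variable {F}

theorem cls_one : cls F 1 = 1 := by
  rw [cls, dif_neg one_ne_zero, Units.mk0_one]
  exact map_one (MonoidAlgebra.of ℤ (SqClassGroup F))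

theorem cls_mul {a b : F} (ha : a ≠ 0) (hb : b ≠ 0) : cls F (a * b) = cls F a * cls F b := by
  rw [cls, cls, cls, dif_neg (mul_ne_zero ha hb), dif_neg ha, dif_neg hb, Units.mk0_mul]
  exact map_mul (MonoidAlgebra.of ℤ (SqClassGroup F)) (QuotientGroup.mk (Units.mk0 a ha))
    (QuotientGroup.mk (Units.mk0 b hb))

theorem cls_mul_self (a : F) : cls F a * cls F a = 1 := by
  by_cases ha : a = 0
  · rw [ha, cls, dif_pos rfl, mul_one]
  · have hsq : (QuotientGroup.mk (Units.mk0 a ha * Units.mk0 a ha) : SqClassGroup F) = 1 :=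
      (QuotientGroup.eq_one_iff _).mpr ⟨Units.mk0 a ha, sq _⟩
    rw [← cls_mul ha ha, cls, dif_neg (mul_ne_zero ha ha), Units.mk0_mul, hsq]
    exact map_one (MonoidAlgebra.of ℤ (SqClassGroup F))

theorem cls_inv (a : F) : cls F a⁻¹ = cls F a := by
  by_cases ha : a = 0
  · rw [ha, inv_zero]
  · calc cls F a⁻¹ = cls F a⁻¹ * (cls F a * cls F a) := by rw [cls_mul_self, mul_one]
      _ = cls F (a⁻¹ * a) * cls F a := by rw [cls_mul (inv_ne_zero ha) ha, mul_assoc]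
      _ = cls F a := by rw [inv_mul_cancel₀ ha, cls_one, one_mul]

theorem cls_sub_comm {a b : F} (hab : a ≠ b) : cls F (a - b) = cls F (-1) * cls F (b - a) := by
  rw [← cls_mul (neg_ne_zero.mpr one_ne_zero) (sub_ne_zero.mpr hab.symm), neg_one_mul, neg_sub]

theorem cls_mul_self_smul (a : F) (m : RP F) : (cls F a * cls F a) • m = m := by
  rw [cls_mul_self, one_smul]

theorem gen_zero : gen F 0 = 0 :=
  (Submodule.Quotient.mk_eq_zero _).mpr (Submodule.subset_span (Or.inl (Or.inl rfl)))

theorem gen_one : gen F 1 = 0 :=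
  (Submodule.Quotient.mk_eq_zero _).mpr (Submodule.subset_span (Or.inl (Or.inr rfl)))

theorem mk_single_eq_smul_gen (a : F) (c : GrpRing F) :
    (Submodule.Quotient.mk (Finsupp.single a c) : RP F) = c • gen F a := by
  rw [gen, ← Submodule.Quotient.mk_smul, Finsupp.smul_single, smul_eq_mul, mul_one]

theorem five_term_relation {x y : F} (hx0 : x ≠ 0) (hx1 : x ≠ 1) (hy0 : y ≠ 0) (hy1 : y ≠ 1)
    (hxy : x ≠ y) :
    gen F x - gen F y + cls F x • gen F (y / x)
      - cls F (x⁻¹ - 1) • gen F ((1 - x⁻¹) / (1 - y⁻¹))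
      + cls F (1 - x) • gen F ((1 - x) / (1 - y)) = 0 := by
  have hrel := (Submodule.Quotient.mk_eq_zero _).mpr
    (Submodule.subset_span (Or.inr ⟨x, y, hx0, hx1, hy0, hy1, hxy, rfl⟩) :
      _ ∈ Submodule.span (GrpRing F) (refinedRels F))
  simpa only [Submodule.Quotient.mk_add, Submodule.Quotient.mk_sub, mk_single_eq_smul_gen,
    one_smul] using hrel

theorem psi1_zero : psi1 F 0 = 0 := by
  rw [psi1, inv_zero, gen_zero, smul_zero, add_zero]

theorem psi1_one : psi1 F 1 = 0 := by
  rw [psi1, inv_one, gen_one, smul_zero, add_zero]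

theorem psi1_inv (w : F) : psi1 F w⁻¹ = cls F (-1) • psi1 F w := by
  rw [psi1, psi1, inv_inv, smul_add, smul_smul, cls_mul_self, one_smul, add_comm]

theorem psi1_mul_of_ne_one {a b : F} (ha0 : a ≠ 0) (ha1 : a ≠ 1) (hb0 : b ≠ 0) (hb1 : b ≠ 1)
    (hab1 : a * b ≠ 1) : psi1 F (a * b) = psi1 F a + cls F a • psi1 F b := by
  have hab0 : a * b ≠ 0 := mul_ne_zero ha0 hb0
  have ha_ne_ab : a ≠ a * b := fun h => hb1 (mul_left_cancel₀ ha0 (h.symm.trans (mul_one a).symm))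
  have hS := five_term_relation ha0 ha1 hab0 hab1 ha_ne_ab
  have hS_inv := five_term_relation (inv_ne_zero ha0) (inv_ne_one.mpr ha1) (inv_ne_zero hab0)
    (inv_ne_one.mpr hab1) (inv_injective.ne ha_ne_ab)
  rw [mul_div_cancel_left₀ b ha0] at hS
  rw [inv_inv, inv_inv, show (a * b)⁻¹ / a⁻¹ = b⁻¹ by field_simp, cls_inv,
    cls_sub_comm ha1, cls_sub_comm (inv_ne_one.mpr ha1).symm] at hS_inv
  simp only [psi1]
  linear_combination (norm := module) -hS - cls F (-1) • hS_inv
    - cls_mul_self_smul (-1) (cls F (1 - a) • gen F ((1 - a) / (1 - a * b)))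
    + cls_mul_self_smul (-1) (cls F (a⁻¹ - 1) • gen F ((1 - a⁻¹) / (1 - (a * b)⁻¹)))

theorem exists_ne_zero_ne_one_ne (h4 : ∃ s : Finset F, 4 ≤ s.card) (c : F) :
    ∃ u : F, u ≠ 0 ∧ u ≠ 1 ∧ u ≠ c := by
  obtain ⟨s, hs⟩ := h4
  obtain ⟨u, -, hu⟩ := Finset.exists_mem_notMem_of_card_lt_card
    ((Finset.card_le_three (a := (0 : F)) (b := 1) (c := c)).trans_lt hs)
  simp only [Finset.mem_insert, Finset.mem_singleton, not_or] at hu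
  exact ⟨u, hu.1, hu.2.1, hu.2.2⟩

theorem cls_neg_one_smul_psi1 (h4 : ∃ s : Finset F, 4 ≤ s.card) (w : F) :
    cls F (-1) • psi1 F w = -(cls F w • psi1 F w) := by
  rcases eq_or_ne w 0 with rfl | hw0
  · rw [psi1_zero, smul_zero, smul_zero, neg_zero]
  rcases eq_or_ne w 1 with rfl | hw1
  · rw [psi1_one, smul_zero, smul_zero, neg_zero]
  obtain ⟨u, hu0, hu1, hu⟩ := exists_ne_zero_ne_one_ne h4 w⁻¹
  have huw1 : u * w ≠ 1 := fun h => hu (eq_inv_of_mul_eq_one_left h)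
  have h_uw := psi1_mul_of_ne_one hu0 hu1 hw0 hw1 huw1
  have h_u := psi1_mul_of_ne_one (mul_ne_zero hu0 hw0) huw1 (inv_ne_zero hw0)
    (inv_ne_one.mpr hw1) (by rwa [mul_inv_cancel_right₀ hw0])
  rw [mul_inv_cancel_right₀ hw0, psi1_inv, cls_mul hu0 hw0] at h_u
  linear_combination (norm := module) -(cls F w * cls F u) • (h_uw + h_u)
    - cls_mul_self_smul u (cls F w • psi1 F w)
    - cls_mul_self_smul u ((cls F w * cls F w) • cls F (-1) • psi1 F w)
    - cls_mul_self_smul w (cls F (-1) • psi1 F w)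

theorem psi1_mul (h4 : ∃ s : Finset F, 4 ≤ s.card) {a b : F} (ha0 : a ≠ 0) (hb0 : b ≠ 0) :
    psi1 F (a * b) = psi1 F a + cls F a • psi1 F b := by
  rcases eq_or_ne a 1 with rfl | ha1
  · rw [one_mul, psi1_one, cls_one, one_smul, zero_add]
  rcases eq_or_ne b 1 with rfl | hb1
  · rw [mul_one, psi1_one, smul_zero, add_zero]
  rcases eq_or_ne (a * b) 1 with hab1 | hab1
  · rw [hab1, psi1_one, eq_inv_of_mul_eq_one_right hab1, psi1_inv, cls_neg_one_smul_psi1 h4]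
    linear_combination (norm := module) cls_mul_self_smul a (psi1 F a)
  exact psi1_mul_of_ne_one ha0 ha1 hb0 hb1 hab1

theorem cls_sub_one_smul_psi1_comm (h4 : ∃ s : Finset F, 4 ≤ s.card) {a b : F} (ha0 : a ≠ 0)
    (hb0 : b ≠ 0) : (cls F b - 1) • psi1 F a = (cls F a - 1) • psi1 F b := by
  have h_ab := psi1_mul h4 ha0 hb0
  have h_ba := psi1_mul h4 hb0 ha0
  rw [mul_comm] at h_ba
  linear_combination (norm := module) h_ab - h_ba

theorem cls_neg_one_smul_gen_add_gen_inv (h4 : ∃ s : Finset F, 4 ≤ s.card) (w : F) :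
    cls F (-1) • gen F w + gen F w⁻¹ = -(cls F w • psi1 F w) := by
  rw [← cls_neg_one_smul_psi1 h4, ← psi1_inv, psi1, inv_inv, add_comm]

theorem five_term_relation_one_sub {x : F} (hx0 : x ≠ 0) (hx1 : x ≠ 1) (hx : 1 - x ≠ x) :
    gen F x - gen F (1 - x) + (cls F x + cls F (1 - x)) • gen F ((1 - x) / x)
      - cls F ((1 - x) / x) • gen F ((1 - x) / x * ((1 - x) / x)) = 0 := by
  have hy0 : 1 - x ≠ 0 := sub_ne_zero.mpr hx1.symm
  have hS := five_term_relation hx0 hx1 hy0 (by rwa [ne_eq, sub_eq_self]) hx.symm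
  have hz : x⁻¹ - 1 = (1 - x) / x := by rw [div_eq_mul_inv, sub_mul, one_mul, mul_inv_cancel₀ hx0]
  have hzz : (1 - x⁻¹) / (1 - (1 - x)⁻¹) = (1 - x) / x * ((1 - x) / x) := by
    rw [inv_eq_one_div, inv_eq_one_div, one_sub_div hx0, one_sub_div hy0, sub_sub_cancel_left,
      div_div_div_eq, div_mul_div_comm]
    field_simp
    ring
  rw [sub_sub_cancel, hz, hzz] at hS
  linear_combination (norm := module) hS

theorem cls_neg_one_sub_one_smul_gen_sub_gen_one_sub (h4 : ∃ s : Finset F, 4 ≤ s.card) {x : F}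
    (hx0 : x ≠ 0) (hx1 : x ≠ 1) :
    (cls F (-1) - 1) • (gen F x - gen F (1 - x))
      = -((cls F x - 1) * (cls F (1 - x) - 1)) • psi1 F ((1 - x) / x) := by
  rcases eq_or_ne (1 - x) x with hx | hx
  · rw [hx, sub_self, smul_zero, div_self hx0, psi1_one, smul_zero]
  have hy0 : 1 - x ≠ 0 := sub_ne_zero.mpr hx1.symm
  set z := (1 - x) / x with hz
  have hz0 : z ≠ 0 := div_ne_zero hy0 hx0
  have hS := five_term_relation_one_sub hx0 hx1 hx
  have hS' := five_term_relation_one_sub hy0 (by rwa [ne_eq, sub_eq_self])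
    (by rwa [sub_sub_cancel, ne_comm])
  rw [sub_sub_cancel, show x / (1 - x) = z⁻¹ from (inv_div _ _).symm, ← mul_inv, cls_inv] at hS'
  have hgz := cls_neg_one_smul_gen_add_gen_inv h4 z
  have hgzz := cls_neg_one_smul_gen_add_gen_inv h4 (z * z)
  rw [psi1_mul h4 hz0 hz0, cls_mul hz0 hz0, cls_mul_self, one_smul] at hgzz
  have hclsz : cls F z = cls F (1 - x) * cls F x := by
    rw [hz, div_eq_mul_inv, cls_mul hy0 (inv_ne_zero hx0), cls_inv]
  have hcoef : (cls F x + cls F (1 - x)) * cls F z - cls F z * (1 + cls F z)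
      = -((cls F x - 1) * (cls F (1 - x) - 1)) := by
    rw [hclsz]
    linear_combination (cls F (1 - x) - 1) * cls_mul_self x
      + (cls F x - cls F x * cls F x) * cls_mul_self (1 - x)
  linear_combination (norm := module) cls F (-1) • hS + hS' - (cls F x + cls F (1 - x)) • hgz
    + cls F z • hgzz + hcoef • psi1 F z

theorem cls_neg_one_smul_cls_sub_one_smul_psi1 (h4 : ∃ s : Finset F, 4 ≤ s.card) {a b : F}
    (ha0 : a ≠ 0) (hb0 : b ≠ 0) :
    cls F (-1) • (cls F b - 1) • psi1 F a = (cls F b - 1) • psi1 F a := by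
  linear_combination (norm := module) (cls F b - 1) • cls_neg_one_smul_psi1 h4 a
    - (cls F a + 1) • cls_sub_one_smul_psi1_comm h4 ha0 hb0 - cls_mul_self_smul a (psi1 F b)

theorem cls_sub_one_mul_cls_sub_one_smul_psi1_div (h4 : ∃ s : Finset F, 4 ≤ s.card) {a b : F}
    (ha0 : a ≠ 0) (hb0 : b ≠ 0) :
    ((cls F a - 1) * (cls F b - 1)) • psi1 F (b / a) = 0 := by
  have hdiv : psi1 F (b / a) = psi1 F b - (cls F b * cls F a) • psi1 F a := by
    rw [div_eq_mul_inv, psi1_mul h4 hb0 (inv_ne_zero ha0), psi1_inv, cls_neg_one_smul_psi1 h4,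
      smul_neg, smul_smul, sub_eq_add_neg]
  have hcomm := cls_sub_one_smul_psi1_comm h4 ha0 hb0
  have hsq (c : F) : (cls F c - 1) * (cls F c - 1) = -2 * (cls F c - 1) := by
    linear_combination cls_mul_self c
  have hcoef :
      (cls F a - 1) * (cls F b - 1) * (cls F b * cls F a) = (cls F a - 1) * (cls F b - 1) := by
    linear_combination (1 - cls F a) * cls_mul_self b
      + (cls F b * cls F b - cls F b) * cls_mul_self a
  calc ((cls F a - 1) * (cls F b - 1)) • psi1 F (b / a)
      = (cls F b - 1) • (cls F a - 1) • psi1 F b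
        - (cls F a - 1) • (cls F b - 1) • psi1 F a := by
        rw [hdiv, smul_sub, smul_smul, hcoef]
        module
    _ = (cls F b - 1) • (cls F b - 1) • psi1 F a - (cls F a - 1) • (cls F a - 1) • psi1 F b := by
        rw [hcomm]
    _ = (-2 : GrpRing F) • ((cls F b - 1) • psi1 F a - (cls F a - 1) • psi1 F b) := by
        rw [smul_smul, smul_smul, hsq, hsq, smul_sub, mul_smul, mul_smul]
    _ = 0 := by rw [hcomm, sub_self, smul_zero]

end

/-- The constant `C_F = [x] + ⟨-1⟩[1-x] + ⟨⟨1-x⟩⟩ψ₁(x)` (for any `x ∈ F \ {0,1}`) in the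
refined pre-Bloch group satisfies `⟨-1⟩·C_F = C_F`. -/
theorem cls_neg_one_smul_CF (h4 : ∃ s : Finset F, 4 ≤ s.card)
    (x : F) (hx0 : x ≠ 0) (hx1 : x ≠ 1) :
    cls F (-1) • Cexpr F x = Cexpr F x := by
  have hy0 : 1 - x ≠ 0 := sub_ne_zero.mpr hx1.symm
  have hgen := cls_neg_one_sub_one_smul_gen_sub_gen_one_sub h4 hx0 hx1
  have hpsi1_div := cls_sub_one_mul_cls_sub_one_smul_psi1_div h4 hx0 hy0
  have hpsi1 := cls_neg_one_smul_cls_sub_one_smul_psi1 h4 hx0 hy0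
  rw [Cexpr]
  linear_combination (norm := module) hgen - hpsi1_div + hpsi1
    + cls_mul_self_smul (-1) (gen F (1 - x))
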